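/- Let p ≥ 1, let a < 0 and b > 0 be real numbers, let j ∈ ℤ, and let V, C be p×p real matrices. Then λ^{j+1} · e^{aλ − b/λ} · V · exp((log λ)·C) tends to the zero matrix both as λ → 0⁺ and as λ → +∞. -/

import Mathlib

/-!
In a normed algebra with `‖1‖ = 1`,
`‖exp (log λ • C)‖ ≤ e^{|log λ| ‖C‖} ≤ λ^{‖C‖} + λ^{-‖C‖}`, so the matrix factor grows at most
polynomially in `λ` and `λ⁻¹`. The scalar factor `λ^{j+1} e^{aλ - b/λ}` beats every real power
of `λ`: at `0⁺` through `e^{-b/λ}`, at `+∞` through `e^{aλ}`. The matrices carry the `L∞`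
operator norm, whose topology is the entrywise one.
-/

open Filter Topology NormedSpace

section NormedAlgebra

variable {𝔸 : Type*} [NormedRing 𝔸] [NormedAlgebra ℝ 𝔸] [NormOneClass 𝔸]

theorem NormedSpace.norm_exp_le_exp_norm (x : 𝔸) : ‖exp x‖ ≤ Real.exp ‖x‖ := by
  have hterm (n : ℕ) : ‖(n.factorial⁻¹ : ℝ) • x ^ n‖ ≤ ‖x‖ ^ n / n.factorial := by
    rw [norm_smul, norm_inv, Real.norm_natCast, div_eq_inv_mul]
    gcongr
    exact norm_pow_le x n
  calc ‖exp x‖ = ‖∑' n : ℕ, (n.factorial⁻¹ : ℝ) • x ^ n‖ := by rw [exp_eq_tsum ℝ]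
    _ ≤ ∑' n : ℕ, ‖x‖ ^ n / n.factorial :=
        tsum_of_norm_bounded (Real.summable_pow_div_factorial ‖x‖).hasSum hterm
    _ = Real.exp ‖x‖ := by rw [Real.exp_eq_exp_ℝ, exp_eq_tsum_div]

theorem norm_exp_log_smul_le (C : 𝔸) {l : ℝ} (hl : 0 < l) :
    ‖exp (Real.log l • C)‖ ≤ l ^ ‖C‖ + l ^ (-‖C‖) := by
  have hsplit : Real.exp (|Real.log l| * ‖C‖) ≤
      Real.exp (Real.log l * ‖C‖) + Real.exp (Real.log l * -‖C‖) := by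
    rcases abs_choice (Real.log l) with h | h <;> rw [h]
    · linarith [Real.exp_pos (Real.log l * -‖C‖)]
    · rw [neg_mul, ← mul_neg]
      linarith [Real.exp_pos (Real.log l * ‖C‖)]
  calc ‖exp (Real.log l • C)‖ ≤ Real.exp (|Real.log l| * ‖C‖) := by
        simpa [norm_smul] using norm_exp_le_exp_norm (Real.log l • C)
    _ ≤ l ^ ‖C‖ + l ^ (-‖C‖) := by simpa only [Real.rpow_def_of_pos hl] using hsplit

theorem tendsto_zpow_mul_smul_mul_exp_log_smul {F : Filter ℝ} (hF : ∀ᶠ l in F, 0 < l)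
    {φ : ℝ → ℝ} (hφ : ∀ s : ℝ, Tendsto (fun l => l ^ s * φ l) F (𝓝 0)) (k : ℤ) (V C : 𝔸) :
    Tendsto (fun l => (l ^ k * φ l) • (V * exp (Real.log l • C))) F (𝓝 0) := by
  have hshift (s : ℝ) : Tendsto (fun l => |l ^ (s + k) * φ l|) F (𝓝 0) := by
    simpa using (hφ (s + k)).abs
  have hbound := ((hshift ‖C‖).add (hshift (-‖C‖))).const_mul ‖V‖
  rw [add_zero, mul_zero] at hbound
  refine squeeze_zero_norm' ?_ hbound
  filter_upwards [hF] with l hl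
  have hpow (s : ℝ) : |l ^ (s + k) * φ l| = l ^ s * |l ^ k * φ l| := by
    rw [Real.rpow_add hl, Real.rpow_intCast, mul_assoc, abs_mul,
      abs_of_pos (Real.rpow_pos_of_pos hl s)]
  calc ‖(l ^ k * φ l) • (V * exp (Real.log l • C))‖
      ≤ |l ^ k * φ l| * (‖V‖ * ‖exp (Real.log l • C)‖) := by
        rw [norm_smul, Real.norm_eq_abs]
        gcongr
        exact norm_mul_le _ _
    _ ≤ |l ^ k * φ l| * (‖V‖ * (l ^ ‖C‖ + l ^ (-‖C‖))) := by
        gcongr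
        exact norm_exp_log_smul_le C hl
    _ = ‖V‖ * (|l ^ (‖C‖ + k) * φ l| + |l ^ (-‖C‖ + k) * φ l|) := by
        rw [hpow, hpow]; ring

end NormedAlgebra

theorem tendsto_rpow_mul_exp_mul_sub_div_nhdsGT_zero (s a : ℝ) {b : ℝ} (hb : 0 < b) :
    Tendsto (fun l : ℝ => l ^ s * Real.exp (a * l - b / l)) (𝓝[>] 0) (𝓝 0) := by
  have hinv : Tendsto (fun l : ℝ => l ^ s * Real.exp (-b / l)) (𝓝[>] 0) (𝓝 0) := by
    refine ((tendsto_rpow_mul_exp_neg_mul_atTop_nhds_zero (-s) b hb).comp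
      tendsto_inv_nhdsGT_zero).congr' ?_
    filter_upwards [self_mem_nhdsWithin] with l (hl : 0 < l)
    simp [Real.inv_rpow hl.le, Real.rpow_neg hl.le, div_eq_mul_inv, neg_mul]
  have hlin : Tendsto (fun l : ℝ => Real.exp (a * l)) (𝓝[>] 0) (𝓝 1) := by
    refine ((Continuous.tendsto' (by fun_prop) 0 1 ?_)).mono_left nhdsWithin_le_nhds
    simp
  simpa [sub_eq_add_neg, Real.exp_add, neg_div, mul_comm, mul_left_comm] using hinv.mul hlin

theorem tendsto_rpow_mul_exp_mul_sub_div_atTop (s b : ℝ) {a : ℝ} (ha : a < 0) :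
    Tendsto (fun l : ℝ => l ^ s * Real.exp (a * l - b / l)) atTop (𝓝 0) := by
  have hlin : Tendsto (fun l : ℝ => l ^ s * Real.exp (a * l)) atTop (𝓝 0) := by
    simpa using tendsto_rpow_mul_exp_neg_mul_atTop_nhds_zero s (-a) (neg_pos.mpr ha)
  have hinv : Tendsto (fun l : ℝ => Real.exp (-b / l)) atTop (𝓝 1) := by
    exact (Real.continuous_exp.tendsto' 0 1 Real.exp_zero).comp
      (tendsto_const_nhds.div_atTop tendsto_id)
  simpa [sub_eq_add_neg, Real.exp_add, neg_div, mul_assoc] using hlin.mul hinv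

theorem statement15_general {p : ℕ} (a b : ℝ) (ha : a < 0) (hb : 0 < b) (j : ℤ)
    (V C : Matrix (Fin p) (Fin p) ℝ) :
    ∀ x y : Fin p,
      Tendsto
        (fun l : ℝ =>
          ((l ^ (j + 1) * Real.exp (a * l - b / l)) •
            (V * NormedSpace.exp ((Real.log l) • C))) x y)
        (nhdsWithin 0 (Set.Ioi (0 : ℝ))) (nhds 0) ∧
      Tendsto
        (fun l : ℝ =>
          ((l ^ (j + 1) * Real.exp (a * l - b / l)) •
            (V * NormedSpace.exp ((Real.log l) • C))) x y)
        atTop (nhds 0) := by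
  intro x y
  have : Nonempty (Fin p) := ⟨x⟩
  let _ := Matrix.linftyOpNormedRing (n := Fin p) (α := ℝ)
  let _ := Matrix.linftyOpNormedAlgebra (n := Fin p) (R := ℝ) (α := ℝ)
  have hentry {F : Filter ℝ} (hF : ∀ᶠ l in F, 0 < l)
      (hφ : ∀ s : ℝ, Tendsto (fun l => l ^ s * Real.exp (a * l - b / l)) F (𝓝 0)) :
      Tendsto (fun l : ℝ => ((l ^ (j + 1) * Real.exp (a * l - b / l)) •
        (V * exp (Real.log l • C))) x y) F (𝓝 0) :=
    tendsto_pi_nhds.1 (tendsto_pi_nhds.1 (tendsto_zpow_mul_smul_mul_exp_log_smul hF hφ _ V C) x) y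
  exact ⟨hentry self_mem_nhdsWithin (tendsto_rpow_mul_exp_mul_sub_div_nhdsGT_zero · a hb),
    hentry (eventually_gt_atTop 0) (tendsto_rpow_mul_exp_mul_sub_div_atTop · b ha)⟩

/-- for `a < 0`, `b > 0`, `j ∈ ℤ` and `p×p` real matrices `V`, `C`,
the matrix `λ^{j+1} e^{aλ - b/λ} V exp((log λ) C)` tends to the zero matrix
(entrywise) both as `λ → 0⁺` and as `λ → +∞`. -/
theorem statement15 {p : ℕ} (hp : 1 ≤ p) (a b : ℝ) (ha : a < 0) (hb : 0 < b) (j : ℤ)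
    (V C : Matrix (Fin p) (Fin p) ℝ) :
    ∀ x y : Fin p,
      Tendsto
        (fun l : ℝ =>
          ((l ^ (j + 1) * Real.exp (a * l - b / l)) •
            (V * NormedSpace.exp ((Real.log l) • C))) x y)
        (nhdsWithin 0 (Set.Ioi (0 : ℝ))) (nhds 0) ∧
      Tendsto
        (fun l : ℝ =>
          ((l ^ (j + 1) * Real.exp (a * l - b / l)) •
            (V * NormedSpace.exp ((Real.log l) • C))) x y)
        atTop (nhds 0) :=
  statement15_general a b ha hb j V C
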